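/- arXiv:2210.04860 — 7 statements merged into one kernel-verified Lean document; each statement's English description precedes it below -/
import Mathlib

section
/- Let Q be a real symmetric P×P matrix with eigenvalues ω_1,…,ω_P and corresponding orthonormal eigenvectors v_1,…,v_P, let E ∈ ℝ and α > 0. For θ ∈ ℝ^P define z(θ) = (1/2)(θ⊤Qθ − E) and the loss L(θ) = (1/2) z(θ)², and let (θ_t) be the gradient-descent iterates θ_{t+1} = θ_t − α ∇L(θ_t). Define the rescaled quantities z̃_t = α z(θ_t) and J̃_{i,t} = √α · ⟨Qθ_t, v_i⟩ for 1 ≤ i ≤ P. Then for every t: z̃_{t+1} − z̃_t = − z̃_t Σ_{i=1}^P J̃_{i,t}² + (1/2) z̃_t² Σ_{i=1}^P ω_i J̃_{i,t}², and J̃_{i,t+1}² − J̃_{i,t}² = − z̃_t ω_i (2 − z̃_t ω_i) J̃_{i,t}² for all 1 ≤ i ≤ P. -/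
/-!
The gradient of `L` at `θ` is `z(θ) • Qθ`, so a gradient step is `θ ↦ θ - z̃ • Qθ`. For a
symmetric `Q` this step multiplies every eigencoordinate `⟨Qθ, v_i⟩` by `1 - z̃ ω_i`, and changes
the quadratic form `⟨θ, Qθ⟩` by `-2 z̃ ‖Qθ‖² + z̃² ⟨Qθ, Q²θ⟩`. Expanding `‖Qθ‖²` and `⟨Qθ, Q²θ⟩`
in the orthonormal eigenbasis gives `Σ J̃_i² / α` and `Σ ω_i J̃_i² / α`.
-/

open Matrix
open scoped RealInnerProductSpace

theorem HasDerivAt.comp_hasGradientAt {F : Type*} [NormedAddCommGroup F] [InnerProductSpace ℝ F]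
    [CompleteSpace F] {φ : ℝ → ℝ} {φ' : ℝ} {f : F → ℝ} {g x : F}
    (hφ : HasDerivAt φ φ' (f x)) (hf : HasGradientAt f g x) :
    HasGradientAt (fun y => φ (f y)) (φ' • g) x := by
  rw [hasGradientAt_iff_hasFDerivAt] at hf ⊢
  rw [map_smul]
  exact hφ.comp_hasFDerivAt x hf

namespace LinearMap.IsSymmetric

variable {F : Type*} [NormedAddCommGroup F] [InnerProductSpace ℝ F] {T : F →ₗ[ℝ] F}

theorem hasGradientAt_inner_map_self [FiniteDimensional ℝ F] (hT : T.IsSymmetric) (x : F) :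
    HasGradientAt (fun y => ⟪y, T y⟫) ((2 : ℝ) • T x) x := by
  rw [hasGradientAt_iff_hasFDerivAt]
  refine ((hasFDerivAt_id x).inner ℝ T.toContinuousLinearMap.hasFDerivAt).congr_fderiv ?_
  ext h
  simp [real_inner_comm (T x) h, hT x h]
  ring

theorem hasGradientAt_half_sq_residual [FiniteDimensional ℝ F] (hT : T.IsSymmetric) (E : ℝ)
    (x : F) :
    HasGradientAt (fun y => 1 / 2 * (1 / 2 * (⟪y, T y⟫ - E)) ^ 2)
      ((1 / 2 * (⟪x, T x⟫ - E)) • T x) x := by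
  have hφ : HasDerivAt (fun s : ℝ => 1 / 2 * (1 / 2 * (s - E)) ^ 2) ((⟪x, T x⟫ - E) / 4)
      ⟪x, T x⟫ := by
    refine (((((hasDerivAt_id _).sub_const E).const_mul (1 / 2 : ℝ)).pow 2).const_mul
      (1 / 2 : ℝ)).congr_deriv ?_
    norm_num
    ring
  convert hφ.comp_hasGradientAt (f := fun y => ⟪y, T y⟫) (hT.hasGradientAt_inner_map_self x)
    using 1
  rw [smul_smul]
  congr 1
  ring

theorem inner_map_sub_smul_map_eigenvector (hT : T.IsSymmetric) {v : F} {ω : ℝ}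
    (hv : T v = ω • v) (c : ℝ) (x : F) :
    ⟪T (x - c • T x), v⟫ = (1 - c * ω) * ⟪T x, v⟫ := by
  rw [map_sub, map_smul, inner_sub_left, real_inner_smul_left, hT (T x) v, hv,
    real_inner_smul_right]
  ring

theorem inner_map_self_sub_smul_map (hT : T.IsSymmetric) (c : ℝ) (x : F) :
    ⟪x - c • T x, T (x - c • T x)⟫ =
      ⟪x, T x⟫ - 2 * c * ‖T x‖ ^ 2 + c ^ 2 * ⟪T x, T (T x)⟫ := by
  rw [map_sub, map_smul, inner_sub_left, inner_sub_right, inner_sub_right,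
    real_inner_smul_left, real_inner_smul_left, real_inner_smul_right, real_inner_smul_right,
    ← hT x (T x), real_inner_self_eq_norm_sq]
  ring

theorem inner_map_self_eq_sum_of_eigenbasis {ι : Type*} [Fintype ι] (hT : T.IsSymmetric)
    (b : OrthonormalBasis ι ℝ F) {ω : ι → ℝ} (hb : ∀ i, T (b i) = ω i • b i) (x : F) :
    ⟪x, T x⟫ = ∑ i, ω i * ⟪x, b i⟫ ^ 2 := by
  rw [← b.sum_inner_mul_inner x (T x)]
  refine Finset.sum_congr rfl fun i _ => ?_
  rw [← hT, hb, real_inner_smul_left, real_inner_comm]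
  ring

end LinearMap.IsSymmetric

/-- Gradient descent on the quartic loss `L(θ) = z(θ)²/2` with
`z(θ) = (1/2)(θᵀQθ − E)` for a symmetric matrix `Q` with eigenvalues `ω_i` and
orthonormal eigenvectors `v_i`.  The rescaled quantities `z̃_t = α z(θ_t)` and
`J̃_{i,t} = √α ⟨Qθ_t, v_i⟩` satisfy the mode recursions
`z̃_{t+1} − z̃_t = − z̃_t Σ_i J̃_{i,t}² + (1/2) z̃_t² Σ_i ω_i J̃_{i,t}²` and
`J̃_{i,t+1}² − J̃_{i,t}² = − z̃_t ω_i (2 − z̃_t ω_i) J̃_{i,t}²`. -/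
theorem stmt0 (P : ℕ) (Q : Matrix (Fin P) (Fin P) ℝ) (hQ : Q.IsSymm)
    (ω : Fin P → ℝ) (v : Fin P → EuclideanSpace ℝ (Fin P))
    (hON : Orthonormal ℝ v)
    (hev : ∀ i, Q.mulVec (v i) = ω i • (v i : Fin P → ℝ))
    (E α : ℝ) (hα : 0 < α)
    (z : EuclideanSpace ℝ (Fin P) → ℝ)
    (hz : ∀ θ, z θ = (1 / 2) * ((θ : Fin P → ℝ) ⬝ᵥ Q.mulVec θ - E))
    (L : EuclideanSpace ℝ (Fin P) → ℝ)
    (hL : ∀ θ, L θ = (1 / 2) * (z θ) ^ 2)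
    (θ : ℕ → EuclideanSpace ℝ (Fin P))
    (hθ : ∀ t, θ (t + 1) = θ t - α • gradient L (θ t))
    (zt : ℕ → ℝ) (hzt : ∀ t, zt t = α * z (θ t))
    (Jt : Fin P → ℕ → ℝ)
    (hJt : ∀ i t, Jt i t = Real.sqrt α * (Q.mulVec (θ t) ⬝ᵥ (v i : Fin P → ℝ))) :
    (∀ t, zt (t + 1) - zt t =
        - zt t * ∑ i, (Jt i t) ^ 2 + (1 / 2) * (zt t) ^ 2 * ∑ i, ω i * (Jt i t) ^ 2) ∧
      (∀ i t, (Jt i (t + 1)) ^ 2 - (Jt i t) ^ 2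
        = - zt t * ω i * (2 - zt t * ω i) * (Jt i t) ^ 2) := by
  set T := toEuclideanLin Q
  have hT : T.IsSymmetric := isSymmetric_toEuclideanLin_iff.mpr hQ
  have hTv : ∀ i, T (v i) = ω i • v i := fun i => by
    ext j
    exact congrFun (hev i) j
  have hzT : ∀ x, z x = 1 / 2 * (⟪x, T x⟫ - E) := fun x => by
    rw [hz, EuclideanSpace.inner_eq_star_dotProduct, star_trivial, dotProduct_comm]
    rfl
  have hJT : ∀ i t, Jt i t = √α * ⟪T (θ t), v i⟫ := fun i t => by
    rw [hJt, real_inner_comm, EuclideanSpace.inner_eq_star_dotProduct, star_trivial]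
    rfl
  have hstep : ∀ t, θ (t + 1) = θ t - zt t • T (θ t) := fun t => by
    have hLT : L = fun y => 1 / 2 * (1 / 2 * (⟪y, T y⟫ - E)) ^ 2 := by
      funext y; rw [hL, hzT]
    rw [hθ, hLT, (hT.hasGradientAt_half_sq_residual E (θ t)).gradient, smul_smul, hzt, hzT]
  let b : OrthonormalBasis (Fin P) ℝ (EuclideanSpace ℝ (Fin P)) :=
    .mk hON (hON.linearIndependent.span_eq_top_of_card_eq_finrank' (by simp)).ge
  have hb : ⇑b = v := OrthonormalBasis.coe_mk _ _
  have hsqrt : √α ^ 2 = α := Real.sq_sqrt hα.le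
  have hsumJ : ∀ t, ∑ i, Jt i t ^ 2 = α * ‖T (θ t)‖ ^ 2 := fun t => by
    simp_rw [hJT, mul_pow, hsqrt, ← Finset.mul_sum, ← b.sum_sq_inner_left, hb]
  have hsumωJ : ∀ t, ∑ i, ω i * Jt i t ^ 2 = α * ⟪T (θ t), T (T (θ t))⟫ := fun t => by
    rw [hT.inner_map_self_eq_sum_of_eigenbasis b (hb ▸ hTv), Finset.mul_sum]
    refine Finset.sum_congr rfl fun i _ => ?_
    rw [hJT, hb, mul_pow, hsqrt]
    ring
  refine ⟨fun t => ?_, fun i t => ?_⟩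
  · rw [hsumJ, hsumωJ, hzt (t + 1), hstep, hzT, hT.inner_map_self_sub_smul_map, hzt,
      hzT]
    ring
  · have hJstep : Jt i (t + 1) = (1 - zt t * ω i) * Jt i t := by
      rw [hJT, hJT, hstep, hT.inner_map_sub_smul_map_eigenvector (hTv i)]
      ring
    rw [hJstep]
    ring
end

section
/- Let P ≥ 1, let ω_1,…,ω_P be nonzero reals, and let real sequences z̃_t and J̃_{1,t}²,…,J̃_{P,t}² satisfy the gradient-descent mode recursions z̃_{t+1} − z̃_t = − z̃_t Σ_i J̃_{i,t}² + (1/2) z̃_t² Σ_i ω_i J̃_{i,t}² and J̃_{i,t+1}² − J̃_{i,t}² = − z̃_t ω_i (2 − z̃_t ω_i) J̃_{i,t}². Define T_t(k) = Σ_{i=1}^P ω_i^k J̃_{i,t}². Then the quantity E_t = T_t(−1) − 2 z̃_t is conserved: T_{t+1}(−1) − 2 z̃_{t+1} = T_t(−1) − 2 z̃_t for all t. -/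
/-- For the gradient-descent mode recursions of the quartic model with nonzero
eigenvalues `ω_i`, the quantity `E_t = T_t(−1) − 2 z̃_t` is conserved, where
`T_t(k) = Σ_i ω_i^k J̃_{i,t}²`. -/
theorem stmt1 (P : ℕ) (hP : 1 ≤ P) (ω : Fin P → ℝ) (hω : ∀ i, ω i ≠ 0)
    (z : ℕ → ℝ) (J2 : Fin P → ℕ → ℝ)
    (hz : ∀ t, z (t + 1) - z t =
      - z t * ∑ i, J2 i t + (1 / 2) * (z t) ^ 2 * ∑ i, ω i * J2 i t)
    (hJ : ∀ i t, J2 i (t + 1) - J2 i t = - z t * ω i * (2 - z t * ω i) * J2 i t)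
    (T : ℕ → ℤ → ℝ) (hT : ∀ t k, T t k = ∑ i, (ω i) ^ k * J2 i t) :
    ∀ t, T (t + 1) (-1) - 2 * z (t + 1) = T t (-1) - 2 * z t := by
  intro t
  have key : ∀ i : Fin P, (ω i) ^ (-1 : ℤ) * J2 i (t + 1) - (ω i) ^ (-1 : ℤ) * J2 i t
      = -2 * z t * J2 i t + (z t) ^ 2 * (ω i * J2 i t) := by
    intro i
    have h := hJ i t
    have hne := hω i
    have : (ω i) ^ (-1 : ℤ) * (J2 i (t + 1) - J2 i t)
        = (ω i) ^ (-1 : ℤ) * (- z t * ω i * (2 - z t * ω i) * J2 i t) := by rw [h]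
    rw [zpow_neg_one] at this ⊢
    field_simp at this ⊢
    ring_nf at this ⊢
    linarith
  have hsum : (∑ i, (ω i) ^ (-1 : ℤ) * J2 i (t + 1)) - ∑ i, (ω i) ^ (-1 : ℤ) * J2 i t
      = -2 * z t * (∑ i, J2 i t) + (z t) ^ 2 * ∑ i, ω i * J2 i t := by
    rw [← Finset.sum_sub_distrib, Finset.mul_sum, Finset.mul_sum, ← Finset.sum_add_distrib]
    exact Finset.sum_congr rfl fun i _ => key i
  have hz' := hz t
  rw [hT, hT]
  linarith
end

section
/- Fix ε > 0 and z̃ ∈ ℝ, and set y* = −ε/(2 − (3/2)ε + 2ε²). Suppose y and y' are related by the reduced two-step update y' = y − 2(4 − 3ε + 4ε²) y z̃² − 4ε z̃², and write y = −(1 + δ) ε/(2 − (3/2)ε + 2ε²) and y' = −(1 + δ') ε/(2 − (3/2)ε + 2ε²). Then δ' = (1 − 2(4 − 3ε + 4ε²) z̃²) δ. In particular y* is a fixed point of the y-update for every z̃, and if 0 < 2(4 − 3ε + 4ε²) z̃² < 1 the deviation δ from y* is strictly contracted. -/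
/-!
With `a = 4 − 3ε + 4ε²` the denominator is `D = 2 − (3/2)ε + 2ε² = a/2`, so the affine
update `y ↦ y − 2a z̃² y − 4ε z̃²` fixes `y* = −ε/D` and scales `y − y*` by `1 − 2a z̃²`.
Since `y − y* = −δ ε/D` and `ε/D ≠ 0` (`D > 0` for every `ε`), the deviation `δ` is
scaled by the same factor.
-/

lemma two_sub_mul_add_two_mul_sq_pos (ε : ℝ) : 0 < 2 - 3 / 2 * ε + 2 * ε ^ 2 := by
  nlinarith [sq_nonneg (ε - 3 / 8)]

lemma reducedUpdate_sub_fixedPoint (ε z y : ℝ) :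
    y - 2 * (4 - 3 * ε + 4 * ε ^ 2) * y * z ^ 2 - 4 * ε * z ^ 2
        - -(ε / (2 - 3 / 2 * ε + 2 * ε ^ 2)) =
      (1 - 2 * (4 - 3 * ε + 4 * ε ^ 2) * z ^ 2) *
        (y - -(ε / (2 - 3 / 2 * ε + 2 * ε ^ 2))) := by
  have hcancel : (2 - 3 / 2 * ε + 2 * ε ^ 2) * (ε / (2 - 3 / 2 * ε + 2 * ε ^ 2)) = ε :=
    mul_div_cancel₀ ε (two_sub_mul_add_two_mul_sq_pos ε).ne'
  linear_combination 4 * z ^ 2 * hcancel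

lemma deviation_eq_mul_of_sub_eq_mul {c y y' δ δ' r : ℝ} (hc : c ≠ 0)
    (hδ : y = -(1 + δ) * c) (hδ' : y' = -(1 + δ') * c) (h : y' - -c = r * (y - -c)) :
    δ' = r * δ := by
  subst hδ hδ'
  exact mul_right_cancel₀ hc (by linear_combination -h)

lemma abs_one_sub_mul_lt_abs {s δ : ℝ} (hs₀ : 0 < s) (hs₁ : s < 1) (hδ : δ ≠ 0) :
    |(1 - s) * δ| < |δ| := by
  rw [abs_mul]
  have hfactor : |1 - s| < 1 := abs_lt.mpr ⟨by linarith, by linarith⟩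
  simpa using mul_lt_mul_of_pos_right hfactor (abs_pos.mpr hδ)

/-- For the reduced two-step `y`-update
`y' = y − 2(4 − 3ε + 4ε²) y z̃² − 4ε z̃²`, writing
`y = −(1 + δ) ε/(2 − (3/2)ε + 2ε²)` and `y' = −(1 + δ') ε/(2 − (3/2)ε + 2ε²)`,
one has `δ' = (1 − 2(4 − 3ε + 4ε²) z̃²) δ`.  In particular
`y* = −ε/(2 − (3/2)ε + 2ε²)` is a fixed point, and when
`0 < 2(4 − 3ε + 4ε²) z̃² < 1` and `δ ≠ 0` the deviation is strictly contracted. -/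
theorem stmt10 (ε : ℝ) (hε : 0 < ε) (z : ℝ) (ystar : ℝ)
    (hys : ystar = -ε / (2 - (3 / 2) * ε + 2 * ε ^ 2))
    (y y' δ δ' : ℝ)
    (hy' : y' = y - 2 * (4 - 3 * ε + 4 * ε ^ 2) * y * z ^ 2 - 4 * ε * z ^ 2)
    (hδ : y = -(1 + δ) * (ε / (2 - (3 / 2) * ε + 2 * ε ^ 2)))
    (hδ' : y' = -(1 + δ') * (ε / (2 - (3 / 2) * ε + 2 * ε ^ 2))) :
    δ' = (1 - 2 * (4 - 3 * ε + 4 * ε ^ 2) * z ^ 2) * δ ∧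
      (y = ystar → y' = ystar) ∧
      (0 < 2 * (4 - 3 * ε + 4 * ε ^ 2) * z ^ 2 →
        2 * (4 - 3 * ε + 4 * ε ^ 2) * z ^ 2 < 1 → δ ≠ 0 → |δ'| < |δ|) := by
  have hys' : ystar = -(ε / (2 - 3 / 2 * ε + 2 * ε ^ 2)) := hys.trans (neg_div _ _)
  have hupdate : y' - ystar = (1 - 2 * (4 - 3 * ε + 4 * ε ^ 2) * z ^ 2) * (y - ystar) := by
    rw [hy', hys']
    exact reducedUpdate_sub_fixedPoint ε z y
  have hscale : δ' = (1 - 2 * (4 - 3 * ε + 4 * ε ^ 2) * z ^ 2) * δ := by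
    refine deviation_eq_mul_of_sub_eq_mul
      (div_ne_zero hε.ne' (two_sub_mul_add_two_mul_sq_pos ε).ne') hδ hδ' ?_
    rwa [hys'] at hupdate
  refine ⟨hscale, fun hfix => ?_, fun hs₀ hs₁ hδ₀ => ?_⟩
  · rw [hfix, sub_self, mul_zero] at hupdate
    exact sub_eq_zero.mp hupdate
  · rw [hscale]
    exact abs_one_sub_mul_lt_abs hs₀ hs₁ hδ₀
end

section
/- Fix ε ∈ (0, 1] and B ∈ (0, 1], set c = 4 − 3ε + 4ε² and y* = −ε/(2 − (3/2)ε + 2ε²) (so that 2c·y* = −4ε), and let z ∈ ℝ satisfy (2c − B) z² ≤ 1. Set κ = 7B/(2(2c − B)). Suppose y and y' are reals satisfying the perturbed two-step update inequalities y − 2c z² (y − y*) − B(|y| + ε) z² ≤ y' ≤ y − 2c z² (y − y*) + B(|y| + ε) z². If (1 + κ) y* ≤ y < 0, then (1 + κ) y* ≤ y' < 0. That is, the interval [(1 + κ) y*, 0) is forward-invariant for the perturbed y-dynamics. -/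
set_option maxHeartbeats 1000000 in
/-- Forward invariance of the interval `[(1 + κ) y*, 0)` for the perturbed
two-step `y`-dynamics: with `c = 4 − 3ε + 4ε²`, `y* = −ε/(2 − (3/2)ε + 2ε²)`,
`(2c − B) z² ≤ 1` and `κ = 7B/(2(2c − B))`, if
`y − 2c z² (y − y*) − B(|y| + ε) z² ≤ y' ≤ y − 2c z² (y − y*) + B(|y| + ε) z²`
and `(1 + κ) y* ≤ y < 0`, then `(1 + κ) y* ≤ y' < 0`. -/
theorem stmt13 (ε B : ℝ) (hε : ε ∈ Set.Ioc (0 : ℝ) 1) (hB : B ∈ Set.Ioc (0 : ℝ) 1)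
    (c ystar : ℝ) (hc : c = 4 - 3 * ε + 4 * ε ^ 2)
    (hys : ystar = -ε / (2 - (3 / 2) * ε + 2 * ε ^ 2))
    (z : ℝ) (hz : (2 * c - B) * z ^ 2 ≤ 1)
    (κ : ℝ) (hκ : κ = 7 * B / (2 * (2 * c - B)))
    (y y' : ℝ)
    (hlow : y - 2 * c * z ^ 2 * (y - ystar) - B * (|y| + ε) * z ^ 2 ≤ y')
    (hup : y' ≤ y - 2 * c * z ^ 2 * (y - ystar) + B * (|y| + ε) * z ^ 2)
    (hy1 : (1 + κ) * ystar ≤ y) (hy2 : y < 0) :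
    (1 + κ) * ystar ≤ y' ∧ y' < 0 := by
  obtain ⟨hε0, hε1⟩ := hε
  obtain ⟨hB0, hB1⟩ := hB
  have hcl : 55 / 16 ≤ c := by nlinarith [sq_nonneg (ε - 3 / 8)]
  have hc5 : c ≤ 5 := by
    nlinarith [mul_nonneg (by linarith : (0:ℝ) ≤ 4 * ε + 1) (by linarith : (0:ℝ) ≤ 1 - ε)]
  have hcpos : (0:ℝ) < c := by linarith
  have hD : (0:ℝ) < 2 - (3 / 2) * ε + 2 * ε ^ 2 := by nlinarith [sq_nonneg (ε - 3 / 8)]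
  have hc2 : c = 2 * (2 - (3 / 2) * ε + 2 * ε ^ 2) := by rw [hc]; ring
  have hDys : ystar * (2 - (3 / 2) * ε + 2 * ε ^ 2) = -ε := by
    rw [hys]; exact div_mul_cancel₀ (-ε) (ne_of_gt hD)
  have hcys1 : c * ystar = -(2 * ε) := by
    linear_combination 2 * hDys + ystar * hc2
  have hys0 : ystar < 0 := by
    rw [hys]; exact div_neg_of_neg_of_pos (by linarith) hD
  have h2cB : 0 < 2 * c - B := by linarith
  have hκ0 : 0 < κ := by rw [hκ]; positivity
  have hκeq : κ * (2 * (2 * c - B)) = 7 * B := by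
    rw [hκ]; field_simp
  have hs0 : 0 ≤ z ^ 2 := sq_nonneg z
  have hay : |y| = -y := abs_of_neg hy2
  rw [hay] at hlow hup
  have hcyz : c * ystar * z ^ 2 = -(2 * ε * z ^ 2) := by
    linear_combination z ^ 2 * hcys1
  constructor
  · -- lower bound
    have hcoef : 0 ≤ 1 - (2 * c - B) * z ^ 2 := by linarith
    have h1 : (1 + κ) * ystar * (1 - (2 * c - B) * z ^ 2) - ε * (4 + B) * z ^ 2 ≤ y' := by
      nlinarith [mul_le_mul_of_nonneg_right hy1 hcoef, hcyz, hlow]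
    have hbr2c : 2 * c * (-((1 + κ) * ystar) * (2 * c - B) - ε * (4 + B)) =
        2 * B * ε * (5 - c) := by
      linear_combination (-(2 * (1 + κ) * (2 * c - B))) * hcys1 + 2 * ε * hκeq
    have hbr : 0 ≤ -((1 + κ) * ystar) * (2 * c - B) - ε * (4 + B) := by
      nlinarith [mul_nonneg (mul_nonneg hB0.le hε0.le) (by linarith : (0:ℝ) ≤ 5 - c), hbr2c]
    have key : 0 ≤ z ^ 2 * (-((1 + κ) * ystar) * (2 * c - B) - ε * (4 + B)) :=
      mul_nonneg hs0 hbr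
    linarith [h1, key]
  · -- upper bound
    rcases eq_or_lt_of_le hs0 with hz2 | hz2
    · rw [← hz2] at hup
      linarith
    · rcases le_or_gt ((2 * c + B) * z ^ 2) 1 with hco | hco
      · have hco' : 0 ≤ 1 - (2 * c + B) * z ^ 2 := by linarith
        have hyc : y * (1 - (2 * c + B) * z ^ 2) ≤ 0 :=
          mul_nonpos_of_nonpos_of_nonneg hy2.le hco'
        linarith [hup, hcyz, hyc, mul_pos hε0 hz2, mul_le_mul_of_nonneg_right hB1 (mul_pos hε0 hz2).le]
      · have hco' : 1 - (2 * c + B) * z ^ 2 ≤ 0 := by linarith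
        have hmul : y * (1 - (2 * c + B) * z ^ 2) ≤
            (1 + κ) * ystar * (1 - (2 * c + B) * z ^ 2) :=
          mul_le_mul_of_nonpos_right hy1 hco'
        have hE : y' ≤ (1 + κ) * ystar * (1 - (2 * c + B) * z ^ 2) - (4 - B) * ε * z ^ 2 := by
          nlinarith [hup, hcyz, hmul]
        have hkey : 4 * B * (1 + κ) < c * (4 - B) := by
          nlinarith [hκeq, mul_nonneg (mul_nonneg hB0.le hB0.le) (by linarith : (0:ℝ) ≤ 5 - c),
            mul_nonneg (by linarith : (0:ℝ) ≤ 1 - B) (mul_pos hcpos hcpos).le,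
            mul_nonneg (by linarith : (0:ℝ) ≤ 1 - B) hcpos.le, mul_pos hcpos hcpos]
        have hEeq : c * ((1 + κ) * ystar * (1 - (2 * c + B) * z ^ 2) - (4 - B) * ε * z ^ 2) =
            2 * ε * (1 + κ) * ((2 * c + B) * z ^ 2 - 1) - c * (4 - B) * ε * z ^ 2 := by
          linear_combination ((1 + κ) * (1 - (2 * c + B) * z ^ 2)) * hcys1
        have h2 : (2 * c + B) * z ^ 2 - 1 ≤ 2 * B * z ^ 2 := by nlinarith [hz]
        have h2' : 2 * ε * (1 + κ) * ((2 * c + B) * z ^ 2 - 1) ≤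
            2 * ε * (1 + κ) * (2 * B * z ^ 2) :=
          mul_le_mul_of_nonneg_left h2 (by positivity)
        have h3 : ε * z ^ 2 * (4 * B * (1 + κ) - c * (4 - B)) < 0 :=
          mul_neg_of_pos_of_neg (mul_pos hε0 hz2) (by linarith)
        have hcE : c * ((1 + κ) * ystar * (1 - (2 * c + B) * z ^ 2) - (4 - B) * ε * z ^ 2) < 0 := by
          nlinarith [hEeq, h2', h3]
        nlinarith [hcE, hE, hcpos]
end

section
/- Let ω > 0 and let z, a, b : [0, ∞) → ℝ be continuously differentiable functions satisfying dz/dt = − z (a + b), da/dt = 2 ω z a, and db/dt = − 2 ω z b for all t ≥ 0, with initial conditions z(0) > 0 and a(0) = b(0) > 0. Then z(t) > 0 and a(t) − b(t) ≥ 0 for all t ≥ 0, and the function t ↦ a(t) + b(t) is nondecreasing on [0, ∞). That is, this initialization exhibits progressive sharpening (nondecreasing NTK) at all times under gradient flow. -/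
/-!
Each of `z`, `a`, `b` solves a scalar linear equation `f' = g f` with a continuous coefficient,
so an integrating factor `exp (-∫ g)` shows that it keeps the sign of its initial value.
With `z, a, b > 0`, the difference `a - b` has derivative `2ωz(a + b) ≥ 0` and vanishes at `0`,
so it stays nonnegative, and then the NTK `a + b` has derivative `2ωz(a - b) ≥ 0`.
-/

open Set Real

theorem ContinuousOn.exists_hasDerivAt_Ici {E : Type*} [NormedAddCommGroup E] [NormedSpace ℝ E]
    [CompleteSpace E] {g : ℝ → E} {t₀ : ℝ} (hg : ContinuousOn g (Ici t₀)) :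
    ∃ G : ℝ → E, ∀ t ∈ Ici t₀, HasDerivAt G (g t) t := by
  have hext : Continuous fun s => g (max t₀ s) :=
    hg.comp_continuous (continuous_const.max continuous_id) fun s => le_max_left t₀ s
  refine ⟨fun t => ∫ s in t₀..t, g (max t₀ s), fun t ht => ?_⟩
  simpa only [max_eq_right (mem_Ici.mp ht)] using (hext.integral_hasStrictDerivAt t₀ t).hasDerivAt

theorem pos_of_hasDerivAt_eq_mul_self {f g : ℝ → ℝ} {t₀ : ℝ} (hg : ContinuousOn g (Ici t₀))
    (hf : ∀ t ∈ Ici t₀, HasDerivAt f (g t * f t) t) (h₀ : 0 < f t₀) :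
    ∀ t ∈ Ici t₀, 0 < f t := by
  obtain ⟨G, hG⟩ := hg.exists_hasDerivAt_Ici
  have hconst : ∀ t ∈ Ici t₀, HasDerivAt (fun s => f s * exp (-G s)) 0 t := fun t ht => by
    refine ((hf t ht).mul (hG t ht).neg.exp).congr_deriv ?_
    ring
  intro t ht
  have heq : f t * exp (-G t) = f t₀ * exp (-G t₀) :=
    constant_of_has_deriv_right_zero (fun s hs => (hconst s hs.1).continuousAt.continuousWithinAt)
      (fun s hs => (hconst s hs.1).hasDerivWithinAt) t ⟨ht, le_rfl⟩
  have hprod : 0 < f t * exp (-G t) := heq ▸ mul_pos h₀ (exp_pos _)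
  exact (mul_pos_iff_of_pos_right (exp_pos _)).mp hprod

theorem monotoneOn_Ici_of_hasDerivAt_nonneg {f f' : ℝ → ℝ} {t₀ : ℝ}
    (hf : ∀ t ∈ Ici t₀, HasDerivAt f (f' t) t) (hf' : ∀ t ∈ Ici t₀, 0 ≤ f' t) :
    MonotoneOn f (Ici t₀) :=
  monotoneOn_of_hasDerivWithinAt_nonneg (convex_Ici t₀)
    (fun t ht => (hf t ht).continuousAt.continuousWithinAt)
    (fun t ht => (hf t (interior_subset ht)).hasDerivWithinAt)
    (fun t ht => hf' t (interior_subset ht))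

/-- Progressive sharpening under gradient flow for the two-mode quartic model
with eigenvalues `−ω, ω` (`ω > 0`) and equal initial squared Jacobian
components: if `dz/dt = −z(a + b)`, `da/dt = 2ωza`, `db/dt = −2ωzb` on
`[0, ∞)` with `z 0 > 0`, `a 0 = b 0 > 0`, then `z t > 0` and `a t − b t ≥ 0`
for all `t ≥ 0`, and the NTK `a + b` is nondecreasing on `[0, ∞)`. -/
theorem stmt16 (ω : ℝ) (hω : 0 < ω) (z a b : ℝ → ℝ)
    (hz : ∀ t ∈ Set.Ici (0 : ℝ), HasDerivAt z (- z t * (a t + b t)) t)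
    (ha : ∀ t ∈ Set.Ici (0 : ℝ), HasDerivAt a (2 * ω * z t * a t) t)
    (hb : ∀ t ∈ Set.Ici (0 : ℝ), HasDerivAt b (- 2 * ω * z t * b t) t)
    (hz0 : 0 < z 0) (hab0 : a 0 = b 0) (ha0 : 0 < a 0) :
    (∀ t ∈ Set.Ici (0 : ℝ), 0 < z t) ∧
      (∀ t ∈ Set.Ici (0 : ℝ), 0 ≤ a t - b t) ∧
      MonotoneOn (fun t => a t + b t) (Set.Ici (0 : ℝ)) := by
  have hzc : ContinuousOn z (Ici 0) := fun t ht => (hz t ht).continuousAt.continuousWithinAt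
  have hac : ContinuousOn a (Ici 0) := fun t ht => (ha t ht).continuousAt.continuousWithinAt
  have hbc : ContinuousOn b (Ici 0) := fun t ht => (hb t ht).continuousAt.continuousWithinAt
  have hz_pos : ∀ t ∈ Ici 0, 0 < z t := pos_of_hasDerivAt_eq_mul_self (g := fun t => -(a t + b t))
    (hac.add hbc).neg (fun t ht => (hz t ht).congr_deriv (by ring)) hz0
  have ha_pos : ∀ t ∈ Ici 0, 0 < a t :=
    pos_of_hasDerivAt_eq_mul_self (g := fun t => 2 * ω * z t) (continuousOn_const.mul hzc) ha ha0
  have hb_pos : ∀ t ∈ Ici 0, 0 < b t := pos_of_hasDerivAt_eq_mul_self (g := fun t => -2 * ω * z t)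
    (continuousOn_const.mul hzc) hb (hab0 ▸ ha0)
  have hsub_mono : MonotoneOn (fun t => a t - b t) (Ici 0) :=
    monotoneOn_Ici_of_hasDerivAt_nonneg (fun t ht => (ha t ht).sub (hb t ht)) fun t ht => by
      rw [show 2 * ω * z t * a t - -2 * ω * z t * b t = 2 * ω * z t * (a t + b t) by ring]
      exact (mul_pos (mul_pos (mul_pos two_pos hω) (hz_pos t ht))
        (add_pos (ha_pos t ht) (hb_pos t ht))).le
  have hsub_nonneg : ∀ t ∈ Ici 0, 0 ≤ a t - b t := fun t ht => by
    simpa [hab0] using hsub_mono self_mem_Ici ht ht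
  refine ⟨hz_pos, hsub_nonneg,
    monotoneOn_Ici_of_hasDerivAt_nonneg (fun t ht => (ha t ht).add (hb t ht)) fun t ht => ?_⟩
  rw [show 2 * ω * z t * a t + -2 * ω * z t * b t = 2 * ω * z t * (a t - b t) by ring]
  exact mul_nonneg (mul_pos (mul_pos two_pos hω) (hz_pos t ht)).le (hsub_nonneg t ht)
end

section
/- Let K, N ≥ 1, let x ∈ ℝ^N be nonzero, and define the quadratic function f : ℝ^K × ℝ^{K×N} → ℝ by f(v, U) = v⊤ U x. Then the (constant) Hessian of f, viewed as a symmetric linear operator on ℝ^{K + KN}, has exactly the eigenvalues ‖x‖ with multiplicity K, −‖x‖ with multiplicity K, and 0 with multiplicity K(N − 1), where ‖x‖ is the Euclidean norm of x. Explicitly: the zero eigenspace consists of pairs (0, W) with W x = 0, and for each standard basis vector e_i of ℝ^K the pairs (‖x‖ e_i, ± e_i x⊤) are eigenvectors with eigenvalues ±‖x‖. -/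
/-!
Polarizing `f p = ½⟪p, H p⟫` with the symmetry of `H` identifies `H` with the block operator
`(v, U) ↦ (U x, v xᵀ)`. An eigenvector `(v, U)` for `c ≠ 0` satisfies `U x = c v` and
`v xᵀ = c U`; applying the second equation to `x` gives `c² v = (x ⬝ᵥ x) v` with `v ≠ 0`, so
`c = ±‖x‖`, and the eigenvector is `(c w, w xᵀ)` for `w = c⁻¹ v`, a `K`-dimensional family.
For `c = 0` the equations say `v = 0` and `U x = 0`, and `U ↦ U x` is onto `ℝ^K` because
`x ≠ 0`, so its kernel has dimension `KN - K`.
-/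

open Matrix

/-- The parameter space of a one-hidden-layer linear network: `(v, U)` with
`v ∈ ℝ^K` and `U ∈ ℝ^{K×N}`, i.e. `ℝ^{K + KN}`. -/
abbrev ParamSpace (K N : ℕ) := (Fin K → ℝ) × Matrix (Fin K) (Fin N) ℝ

/-- The standard Euclidean inner product on `ParamSpace K N ≃ ℝ^{K + KN}`. -/
def pairInner {K N : ℕ} (p q : ParamSpace K N) : ℝ :=
  p.1 ⬝ᵥ q.1 + ∑ i, ∑ j, p.2 i j * q.2 i j

namespace LinearNet

open Module.End

variable {R : Type*} [Field R] {m n : Type*} [Fintype n]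

lemma vecMulVec_mulVec_eq_smul (u : m → R) (v w : n → R) :
    vecMulVec u v *ᵥ w = (v ⬝ᵥ w) • u := by
  rw [vecMulVec_mulVec, op_smul_eq_smul]

omit [Fintype n] in
lemma vecMulVec_eq_zero_iff {u : m → R} {v : n → R} : vecMulVec u v = 0 ↔ u = 0 ∨ v = 0 := by
  simp only [← ext_iff, vecMulVec_apply, Matrix.zero_apply, mul_eq_zero, funext_iff, Pi.zero_apply,
    forall_or_left, forall_or_right]

/-- The Hessian of `(v, U) ↦ v ⬝ᵥ U *ᵥ x`. -/
def hessian (x : n → R) : Module.End R ((m → R) × Matrix m n R) :=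
  ((mulVecBilin R R).flip x ∘ₗ LinearMap.snd R _ _).prod
    ((vecMulVecBilin R R).flip x ∘ₗ LinearMap.fst R _ _)

@[simp]
lemma hessian_apply (x : n → R) (p : (m → R) × Matrix m n R) :
    hessian x p = (p.2 *ᵥ x, vecMulVec p.1 x) :=
  rfl

def eigenvector (x : n → R) (c : R) : (m → R) →ₗ[R] (m → R) × Matrix m n R :=
  (c • LinearMap.id).prod ((vecMulVecBilin R R).flip x)

omit [Fintype n] in
@[simp]
lemma eigenvector_apply (x : n → R) (c : R) (v : m → R) :
    eigenvector x c v = (c • v, vecMulVec v x) :=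
  rfl

lemma mem_eigenspace_hessian_iff {x : n → R} {c : R} {p : (m → R) × Matrix m n R} :
    p ∈ eigenspace (hessian x) c ↔ p.2 *ᵥ x = c • p.1 ∧ vecMulVec p.1 x = c • p.2 := by
  rw [mem_eigenspace_iff, hessian_apply, Prod.ext_iff]
  rfl

lemma sq_eq_dotProduct_of_hasEigenvalue {x : n → R} {c : R} (hc : c ≠ 0)
    (h : HasEigenvalue (hessian (m := m) x) c) : c ^ 2 = x ⬝ᵥ x := by
  obtain ⟨p, hp, hp0⟩ := h.exists_hasEigenvector
  obtain ⟨h₁, h₂⟩ := mem_eigenspace_hessian_iff.1 hp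
  have hp₁ : p.1 ≠ 0 := by
    rintro hp₁
    rw [hp₁, zero_vecMulVec, eq_comm, smul_eq_zero] at h₂
    exact hp0 (Prod.ext hp₁ (h₂.resolve_left hc))
  have key : (c ^ 2 - x ⬝ᵥ x) • p.1 = 0 := by
    rw [sub_smul, sq, mul_smul, ← h₁, ← smul_mulVec, ← h₂, vecMulVec_mulVec_eq_smul, sub_self]
  exact sub_eq_zero.1 ((smul_eq_zero.1 key).resolve_right hp₁)

lemma eigenvector_mem_eigenspace {x : n → R} {c : R} (hcx : c ^ 2 = x ⬝ᵥ x) (v : m → R) :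
    eigenvector x c v ∈ eigenspace (hessian x) c := by
  rw [mem_eigenspace_hessian_iff, eigenvector_apply]
  refine ⟨?_, smul_vecMulVec c v x⟩
  dsimp only
  rw [vecMulVec_mulVec_eq_smul, ← hcx, sq, mul_smul]

lemma eigenspace_hessian_eq_range {x : n → R} {c : R} (hc : c ≠ 0) (hcx : c ^ 2 = x ⬝ᵥ x) :
    eigenspace (hessian (m := m) x) c = LinearMap.range (eigenvector x c) := by
  ext p
  refine ⟨fun hp => ⟨c⁻¹ • p.1, ?_⟩, ?_⟩
  · obtain ⟨-, h₂⟩ := mem_eigenspace_hessian_iff.1 hp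
    rw [eigenvector_apply, smul_inv_smul₀ hc, smul_vecMulVec, h₂, inv_smul_smul₀ hc]
  · rintro ⟨v, rfl⟩
    exact eigenvector_mem_eigenspace hcx v

lemma mem_eigenspace_zero_hessian_iff {x : n → R} (hx : x ≠ 0) {p : (m → R) × Matrix m n R} :
    p ∈ eigenspace (hessian x) 0 ↔ p.1 = 0 ∧ p.2 *ᵥ x = 0 := by
  simp only [mem_eigenspace_hessian_iff, zero_smul, vecMulVec_eq_zero_iff, hx, or_false]
  exact and_comm

lemma eigenspace_zero_hessian {x : n → R} (hx : x ≠ 0) :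
    eigenspace (hessian (m := m) x) 0 =
      (LinearMap.ker ((mulVecBilin R R).flip x)).map (LinearMap.inr R (m → R) _) := by
  ext p
  rw [mem_eigenspace_zero_hessian_iff hx]
  constructor
  · rintro ⟨h₁, h₂⟩
    exact ⟨p.2, h₂, Prod.ext h₁.symm rfl⟩
  · rintro ⟨W, hW, rfl⟩
    exact ⟨rfl, hW⟩

lemma mulVec_surjective_of_ne_zero {x : n → R} (hx : x ≠ 0) :
    Function.Surjective ((mulVecBilin R R).flip x : Matrix m n R →ₗ[R] m → R) := by
  classical
  obtain ⟨j, hj⟩ := Function.ne_iff.1 hx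
  refine fun w => ⟨vecMulVec w (Pi.single j (x j)⁻¹), ?_⟩
  rw [LinearMap.flip_apply, mulVecBilin_apply, vecMulVec_mulVec_eq_smul, single_dotProduct,
    inv_mul_cancel₀ hj, one_smul]

variable [Fintype m]

lemma finrank_eigenspace_hessian {x : n → R} {c : R} (hc : c ≠ 0) (hcx : c ^ 2 = x ⬝ᵥ x) :
    Module.finrank R (eigenspace (hessian (m := m) x) c) = Fintype.card m := by
  have hinj : Function.Injective (eigenvector (m := m) x c) := fun v w h => by
    simpa [hc] using congrArg Prod.fst h
  rw [eigenspace_hessian_eq_range hc hcx, LinearMap.finrank_range_of_inj hinj,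
    Module.finrank_fintype_fun_eq_card]

lemma finrank_eigenspace_zero_hessian {x : n → R} (hx : x ≠ 0) :
    Module.finrank R (eigenspace (hessian (m := m) x) 0) =
      Fintype.card m * (Fintype.card n - 1) := by
  have hrank := LinearMap.finrank_range_add_finrank_ker ((mulVecBilin R R).flip x :
    Matrix m n R →ₗ[R] m → R)
  rw [LinearMap.range_eq_top.2 (mulVec_surjective_of_ne_zero hx), finrank_top,
    Module.finrank_fintype_fun_eq_card, Module.finrank_matrix, Module.finrank_self, mul_one]
    at hrank
  rw [eigenspace_zero_hessian hx, ← (Submodule.equivMapOfInjective _ LinearMap.inr_injective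
    _).finrank_eq, Nat.mul_sub_one]
  omega

end LinearNet

section pairInner

variable {K N : ℕ}

lemma pairInner_comm (p q : ParamSpace K N) : pairInner p q = pairInner q p := by
  simp only [pairInner, dotProduct_comm, mul_comm]

lemma pairInner_add_right (p q r : ParamSpace K N) :
    pairInner p (q + r) = pairInner p q + pairInner p r := by
  simp only [pairInner, Prod.fst_add, Prod.snd_add, dotProduct_add, Matrix.add_apply, mul_add,
    Finset.sum_add_distrib]
  ring

lemma pairInner_add_left (p q r : ParamSpace K N) :
    pairInner (p + q) r = pairInner p r + pairInner q r := by
  rw [pairInner_comm, pairInner_add_right, pairInner_comm r, pairInner_comm r]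

lemma pairInner_single_fst (i : Fin K) (q : ParamSpace K N) :
    pairInner (Pi.single i 1, 0) q = q.1 i := by
  simp [pairInner]

lemma pairInner_single_snd (i : Fin K) (j : Fin N) (q : ParamSpace K N) :
    pairInner (0, Matrix.single i j 1) q = q.2 i j := by
  simp [pairInner, Matrix.single_apply, ite_and]

lemma eq_of_forall_pairInner_eq {q q' : ParamSpace K N}
    (h : ∀ p, pairInner p q = pairInner p q') : q = q' := by
  ext i
  · rw [← pairInner_single_fst, h, pairInner_single_fst]
  · rw [← pairInner_single_snd, h, pairInner_single_snd]

lemma pairInner_add_map_add {H : Module.End ℝ (ParamSpace K N)}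
    (hsym : ∀ p q, pairInner (H p) q = pairInner p (H q)) (p q : ParamSpace K N) :
    pairInner (p + q) (H (p + q)) =
      pairInner p (H p) + 2 * pairInner p (H q) + pairInner q (H q) := by
  rw [map_add, pairInner_add_left, pairInner_add_right, pairInner_add_right,
    pairInner_comm q (H p), hsym]
  ring

lemma eq_of_pairInner_self_eq {H H' : Module.End ℝ (ParamSpace K N)}
    (hsym : ∀ p q, pairInner (H p) q = pairInner p (H q))
    (hsym' : ∀ p q, pairInner (H' p) q = pairInner p (H' q))
    (h : ∀ p, pairInner p (H p) = pairInner p (H' p)) : H = H' := by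
  refine LinearMap.ext fun q => eq_of_forall_pairInner_eq fun p => ?_
  have := pairInner_add_map_add hsym p q
  rw [h, h, h, pairInner_add_map_add hsym'] at this
  linarith

lemma pairInner_hessian (x : Fin N → ℝ) (p q : ParamSpace K N) :
    pairInner p (LinearNet.hessian x q) = p.1 ⬝ᵥ q.2 *ᵥ x + q.1 ⬝ᵥ p.2 *ᵥ x := by
  simp only [pairInner, LinearNet.hessian_apply, vecMulVec_apply, dotProduct, mulVec,
    Finset.mul_sum]
  congr 1
  exact Finset.sum_congr rfl fun i _ => Finset.sum_congr rfl fun j _ => by ring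

lemma eq_hessian_of_pairInner_self {x : Fin N → ℝ} {H : Module.End ℝ (ParamSpace K N)}
    (hsym : ∀ p q, pairInner (H p) q = pairInner p (H q))
    (hquad : ∀ p : ParamSpace K N, p.1 ⬝ᵥ p.2 *ᵥ x = 1 / 2 * pairInner p (H p)) :
    H = LinearNet.hessian x := by
  refine eq_of_pairInner_self_eq hsym (fun p q => ?_) fun p => ?_
  · rw [pairInner_comm, pairInner_hessian, pairInner_hessian, add_comm]
  · rw [pairInner_hessian]
    linarith [hquad p]

end pairInner

theorem stmt17_general (K N : ℕ) (hK : 1 ≤ K)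
    (x : EuclideanSpace ℝ (Fin N)) (hx : x ≠ 0)
    (f : ParamSpace K N → ℝ)
    (hf : ∀ p : ParamSpace K N, f p = p.1 ⬝ᵥ p.2.mulVec x)
    (H : ParamSpace K N →ₗ[ℝ] ParamSpace K N)
    (hsym : ∀ p q : ParamSpace K N, pairInner (H p) q = pairInner p (H q))
    (hquad : ∀ p : ParamSpace K N, f p = (1 / 2) * pairInner p (H p)) :
    (∀ c : ℝ, Module.End.HasEigenvalue H c → c = ‖x‖ ∨ c = -‖x‖ ∨ c = 0) ∧
    Module.End.HasEigenvalue H ‖x‖ ∧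
    Module.End.HasEigenvalue H (-‖x‖) ∧
    Module.finrank ℝ (Module.End.eigenspace H ‖x‖) = K ∧
    Module.finrank ℝ (Module.End.eigenspace H (-‖x‖)) = K ∧
    Module.finrank ℝ (Module.End.eigenspace H 0) = K * (N - 1) ∧
    ((Module.End.eigenspace H 0 : Set (ParamSpace K N))
      = {p : ParamSpace K N | p.1 = 0 ∧ p.2.mulVec x = 0}) ∧
    (∀ i : Fin K,
      ((Pi.single i ‖x‖,
        Matrix.of fun a j => (Pi.single i (1 : ℝ) : Fin K → ℝ) a * x j) :
        ParamSpace K N) ∈ Module.End.eigenspace H ‖x‖) ∧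
    (∀ i : Fin K,
      ((Pi.single i ‖x‖,
        -(Matrix.of fun a j => (Pi.single i (1 : ℝ) : Fin K → ℝ) a * x j :
          Matrix (Fin K) (Fin N) ℝ)) : ParamSpace K N) ∈ Module.End.eigenspace H (-‖x‖)) := by
  obtain rfl : H = LinearNet.hessian x :=
    eq_hessian_of_pairInner_self hsym fun p => by rw [← hf, hquad]
  have hx' : (x : Fin N → ℝ) ≠ 0 := fun h => hx (WithLp.ofLp_injective 2 h)
  have hnx : ‖x‖ ≠ 0 := norm_ne_zero_iff.2 hx
  have hsq : ‖x‖ ^ 2 = x ⬝ᵥ x := by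
    rw [← real_inner_self_eq_norm_sq, EuclideanSpace.inner_eq_star_dotProduct, star_trivial]
  have hsq' : (-‖x‖) ^ 2 = x ⬝ᵥ x := by rw [neg_sq, hsq]
  have hpos := LinearNet.finrank_eigenspace_hessian (m := Fin K) hnx hsq
  have hneg := LinearNet.finrank_eigenspace_hessian (m := Fin K) (neg_ne_zero.2 hnx) hsq'
  rw [Fintype.card_fin] at hpos hneg
  have hasEigenvalue_of_finrank {c : ℝ} (hc : Module.finrank ℝ
      (Module.End.eigenspace (LinearNet.hessian (m := Fin K) x) c) = K) :
      Module.End.HasEigenvalue (LinearNet.hessian x) c :=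
    Module.End.hasEigenvalue_iff.2 fun h => by rw [h, finrank_bot] at hc; omega
  refine ⟨fun c hc => ?_, hasEigenvalue_of_finrank hpos, hasEigenvalue_of_finrank hneg, hpos, hneg,
    by simpa using LinearNet.finrank_eigenspace_zero_hessian (m := Fin K) hx',
    Set.ext fun p => LinearNet.mem_eigenspace_zero_hessian_iff hx', fun i => ?_, fun i => ?_⟩
  · by_cases hc0 : c = 0
    · exact Or.inr (Or.inr hc0)
    · have hc2 := LinearNet.sq_eq_dotProduct_of_hasEigenvalue hc0 hc
      rw [← hsq] at hc2
      exact (sq_eq_sq_iff_eq_or_eq_neg.1 hc2).imp_right Or.inl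
  · convert LinearNet.eigenvector_mem_eigenspace hsq (Pi.single i 1) using 1
    rw [LinearNet.eigenvector_apply, ← Pi.single_smul, smul_eq_mul, mul_one]
    rfl
  · convert LinearNet.eigenvector_mem_eigenspace hsq' (-Pi.single i 1) using 1
    rw [LinearNet.eigenvector_apply, neg_smul_neg, ← Pi.single_smul, smul_eq_mul, mul_one,
      neg_vecMulVec]
    rfl

/-- Eigenstructure of the (constant) Hessian of `f(v, U) = vᵀ U x` for a
nonzero datapoint `x ∈ ℝ^N`.  `H` is the Hessian of the quadratic `f`,
characterized as the symmetric operator with `f p = (1/2) ⟨p, H p⟩`.  Its only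
eigenvalues are `‖x‖`, `−‖x‖`, `0`, with multiplicities `K`, `K`, `K(N−1)`;
the zero eigenspace consists of the pairs `(0, W)` with `W x = 0`; and for
each standard basis vector `e_i` of `ℝ^K`, `(‖x‖ e_i, ± e_i xᵀ)` is an
eigenvector with eigenvalue `±‖x‖`. -/
theorem stmt17 (K N : ℕ) (hK : 1 ≤ K) (hN : 1 ≤ N)
    (x : EuclideanSpace ℝ (Fin N)) (hx : x ≠ 0)
    (f : ParamSpace K N → ℝ)
    (hf : ∀ p : ParamSpace K N, f p = p.1 ⬝ᵥ p.2.mulVec x)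
    (H : ParamSpace K N →ₗ[ℝ] ParamSpace K N)
    (hsym : ∀ p q : ParamSpace K N, pairInner (H p) q = pairInner p (H q))
    (hquad : ∀ p : ParamSpace K N, f p = (1 / 2) * pairInner p (H p)) :
    (∀ c : ℝ, Module.End.HasEigenvalue H c → c = ‖x‖ ∨ c = -‖x‖ ∨ c = 0) ∧
    Module.End.HasEigenvalue H ‖x‖ ∧
    Module.End.HasEigenvalue H (-‖x‖) ∧
    Module.finrank ℝ (Module.End.eigenspace H ‖x‖) = K ∧
    Module.finrank ℝ (Module.End.eigenspace H (-‖x‖)) = K ∧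
    Module.finrank ℝ (Module.End.eigenspace H 0) = K * (N - 1) ∧
    ((Module.End.eigenspace H 0 : Set (ParamSpace K N))
      = {p : ParamSpace K N | p.1 = 0 ∧ p.2.mulVec x = 0}) ∧
    (∀ i : Fin K,
      ((Pi.single i ‖x‖,
        Matrix.of fun a j => (Pi.single i (1 : ℝ) : Fin K → ℝ) a * x j) :
        ParamSpace K N) ∈ Module.End.eigenspace H ‖x‖) ∧
    (∀ i : Fin K,
      ((Pi.single i ‖x‖,
        -(Matrix.of fun a j => (Pi.single i (1 : ℝ) : Fin K → ℝ) a * x j :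
          Matrix (Fin K) (Fin N) ℝ)) : ParamSpace K N) ∈ Module.End.eigenspace H (-‖x‖)) :=
  stmt17_general K N hK x hx f hf H hsym hquad
end

section
/- Let K, N ≥ 1, let x ∈ ℝ^N be nonzero, set ω = ‖x‖, and define f(v, U) = v⊤ U x for v ∈ ℝ^K and U ∈ ℝ^{K×N}. For each i ∈ {1,…,K} let u_{±,i} = (ω e_i, ± e_i x⊤)/(√2 ω) be the normalized eigenvectors of the Hessian of f with eigenvalues ±ω, and let ∇f(v, U) = (U x, v x⊤) be the gradient of f. Define J_±² = Σ_{i=1}^K ⟨∇f(v, U), u_{±,i}⟩². Then ω^{−1}(J_+² − J_−²) = 2 f(v, U). In particular, the conserved quantity E = ω^{−1}(J_+² − J_−²) − 2f vanishes identically, so the one-hidden-layer linear network on one datapoint is the quartic model with E = 0 and eigenvalues ±‖x‖. -/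
/-! The projections are `⟨∇f, u_{±,i}⟩ = (ω (U x)_i ± ω² v_i) / (√2 ω)`, so by
`(a + b)² - (a - b)² = 4ab` each index contributes `2 ω v_i (U x)_i` to `J_+² - J_-²`. -/

open Matrix

section pairInner

variable {K N : ℕ}

lemma pairInner_smul_right (p q : ParamSpace K N) (c : ℝ) :
    pairInner p (c • q) = c * pairInner p q := by
  simp only [pairInner, Prod.smul_fst, Prod.smul_snd, dotProduct_smul, Matrix.smul_apply, smul_eq_mul,
    Finset.mul_sum, mul_add]
  congr 1
  simp only [mul_left_comm]

lemma pairInner_single_outer (p : ParamSpace K N) (i : Fin K) (s : ℝ) (y : Fin N → ℝ) :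
    pairInner p (s • Pi.single i 1, of fun a j => (Pi.single i (1 : ℝ) : Fin K → ℝ) a * y j) =
      s * p.1 i + ∑ j, p.2 i j * y j := by
  simp [pairInner, Pi.single_apply, mul_comm]

lemma pairInner_outer_single_outer (w v : Fin K → ℝ) (x y : Fin N → ℝ) (i : Fin K) (s : ℝ) :
    pairInner (w, of fun a j => v a * x j)
        (s • Pi.single i 1, of fun a j => (Pi.single i (1 : ℝ) : Fin K → ℝ) a * y j) =
      s * w i + v i * (x ⬝ᵥ y) := by
  simp only [pairInner_single_outer, of_apply, dotProduct, Finset.mul_sum, mul_assoc]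

end pairInner

lemma EuclideanSpace.dotProduct_self_eq_norm_sq {N : ℕ} (x : EuclideanSpace ℝ (Fin N)) :
    x.ofLp ⬝ᵥ x.ofLp = ‖x‖ ^ 2 := by
  rw [← real_inner_self_eq_norm_sq, EuclideanSpace.inner_eq_star_dotProduct, star_trivial]

theorem stmt18_general (K N : ℕ)
    (x : EuclideanSpace ℝ (Fin N)) (hx : x ≠ 0) (ω : ℝ) (hω : ω = ‖x‖)
    (v : Fin K → ℝ) (U : Matrix (Fin K) (Fin N) ℝ)
    (gradf : ParamSpace K N)
    (hgrad : gradf = (U.mulVec x, Matrix.of fun i j => v i * x j))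
    (up um : Fin K → ParamSpace K N)
    (hup : ∀ i, up i = (Real.sqrt 2 * ω)⁻¹ •
      ((ω • (Pi.single i (1 : ℝ) : Fin K → ℝ),
        Matrix.of fun a j => (Pi.single i (1 : ℝ) : Fin K → ℝ) a * x j) :
        ParamSpace K N))
    (hum : ∀ i, um i = (Real.sqrt 2 * ω)⁻¹ •
      ((ω • (Pi.single i (1 : ℝ) : Fin K → ℝ),
        -(Matrix.of fun a j => (Pi.single i (1 : ℝ) : Fin K → ℝ) a * x j :
          Matrix (Fin K) (Fin N) ℝ)) : ParamSpace K N))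
    (Jp2 Jm2 : ℝ)
    (hJp : Jp2 = ∑ i, (pairInner gradf (up i)) ^ 2)
    (hJm : Jm2 = ∑ i, (pairInner gradf (um i)) ^ 2) :
    ω⁻¹ * (Jp2 - Jm2) = 2 * (v ⬝ᵥ U.mulVec x) := by
  have hω0 : ω ≠ 0 := hω ▸ norm_ne_zero_iff.mpr hx
  have hxx : x.ofLp ⬝ᵥ x.ofLp = ω ^ 2 := hω ▸ EuclideanSpace.dotProduct_self_eq_norm_sq x
  have hneg : ∀ i, -(of fun a j => (Pi.single i (1 : ℝ) : Fin K → ℝ) a * x j) =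
      of fun a j => (Pi.single i (1 : ℝ) : Fin K → ℝ) a * (-x.ofLp) j := fun i => by
    ext; simp
  have hsq : ∀ i, pairInner gradf (up i) ^ 2 - pairInner gradf (um i) ^ 2 =
      2 * ω * (v i * (U *ᵥ x) i) := fun i => by
    rw [hup, hum, hgrad, hneg, pairInner_smul_right, pairInner_smul_right,
      pairInner_outer_single_outer, pairInner_outer_single_outer, dotProduct_neg, hxx]
    field_simp
    rw [Real.sq_sqrt zero_le_two]
    ring
  calc ω⁻¹ * (Jp2 - Jm2) = ω⁻¹ * ∑ i, 2 * ω * (v i * (U *ᵥ x) i) := by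
        rw [hJp, hJm, ← Finset.sum_sub_distrib, Finset.sum_congr rfl fun i _ => hsq i]
    _ = 2 * (v ⬝ᵥ U *ᵥ x) := by
        rw [← Finset.mul_sum, dotProduct]
        field_simp

/-- For the one-hidden-layer linear network `f(v, U) = vᵀ U x` on one nonzero
datapoint `x`, with `ω = ‖x‖`, normalized Hessian eigenvectors
`u_{±,i} = (ω e_i, ± e_i xᵀ)/(√2 ω)` and gradient `∇f = (U x, v xᵀ)`, the
squared projections `J_±² = Σ_i ⟨∇f, u_{±,i}⟩²` satisfy
`ω⁻¹ (J_+² − J_−²) = 2 f(v, U)`; i.e. the conserved quantity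
`E = ω⁻¹(J_+² − J_−²) − 2f` vanishes identically. -/
theorem stmt18 (K N : ℕ) (hK : 1 ≤ K) (hN : 1 ≤ N)
    (x : EuclideanSpace ℝ (Fin N)) (hx : x ≠ 0) (ω : ℝ) (hω : ω = ‖x‖)
    (v : Fin K → ℝ) (U : Matrix (Fin K) (Fin N) ℝ)
    (gradf : ParamSpace K N)
    (hgrad : gradf = (U.mulVec x, Matrix.of fun i j => v i * x j))
    (up um : Fin K → ParamSpace K N)
    (hup : ∀ i, up i = (Real.sqrt 2 * ω)⁻¹ •
      ((ω • (Pi.single i (1 : ℝ) : Fin K → ℝ),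
        Matrix.of fun a j => (Pi.single i (1 : ℝ) : Fin K → ℝ) a * x j) :
        ParamSpace K N))
    (hum : ∀ i, um i = (Real.sqrt 2 * ω)⁻¹ •
      ((ω • (Pi.single i (1 : ℝ) : Fin K → ℝ),
        -(Matrix.of fun a j => (Pi.single i (1 : ℝ) : Fin K → ℝ) a * x j :
          Matrix (Fin K) (Fin N) ℝ)) : ParamSpace K N))
    (Jp2 Jm2 : ℝ)
    (hJp : Jp2 = ∑ i, (pairInner gradf (up i)) ^ 2)
    (hJm : Jm2 = ∑ i, (pairInner gradf (um i)) ^ 2) :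
    ω⁻¹ * (Jp2 - Jm2) = 2 * (v ⬝ᵥ U.mulVec x) :=
  stmt18_general K N x hx ω hω v U gradf hgrad up um hup hum Jp2 Jm2 hJp hJm
end
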